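/- Let P be a proper graded ideal of a G-graded ring R. Then P is a graded strongly weakly 2-absorbing ideal of R if and only if for all graded ideals A, B, C of R with P ⊆ A, 0 ≠ ABC ⊆ P implies AB ⊆ P or AC ⊆ P or BC ⊆ P. -/
import Mathlib

variable {G R : Type*} [AddGroup G] [DecidableEq G] [Ring R]

/-- A two-sided ideal is graded if it contains all homogeneous components of its elements. -/
def IsGradedIdeal (𝒜 : G → AddSubgroup R) [GradedRing 𝒜] (P : TwoSidedIdeal R) : Prop :=
  ∀ a ∈ P, ∀ g : G, (DirectSum.decompose 𝒜 a g : R) ∈ P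

/-- Graded strongly weakly 2-absorbing: a proper graded ideal `P` such that for graded
ideals `A, B, C` with `0 ≠ ABC ⊆ P`, we have `AB ⊆ P` or `AC ⊆ P` or `BC ⊆ P`. -/
def IsGradedStronglyWeakly2Absorbing (𝒜 : G → AddSubgroup R) [GradedRing 𝒜]
    (P : TwoSidedIdeal R) : Prop :=
  P ≠ ⊤ ∧ IsGradedIdeal 𝒜 P ∧
    ∀ A B C : TwoSidedIdeal R, IsGradedIdeal 𝒜 A → IsGradedIdeal 𝒜 B → IsGradedIdeal 𝒜 C →
      (∃ a ∈ A, ∃ b ∈ B, ∃ c ∈ C, a * b * c ≠ 0) →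
      (∀ a ∈ A, ∀ b ∈ B, ∀ c ∈ C, a * b * c ∈ P) →
      (∀ a ∈ A, ∀ b ∈ B, a * b ∈ P) ∨ (∀ a ∈ A, ∀ c ∈ C, a * c ∈ P) ∨
        (∀ b ∈ B, ∀ c ∈ C, b * c ∈ P)

/-- The sum of two two-sided ideals, as a two-sided ideal. -/
def idealSum (A P : TwoSidedIdeal R) : TwoSidedIdeal R :=
  TwoSidedIdeal.mk' {x | ∃ a ∈ A, ∃ p ∈ P, x = a + p}
    ⟨0, A.zero_mem, 0, P.zero_mem, (add_zero 0).symm⟩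
    (by rintro x y ⟨a, ha, p, hp, rfl⟩ ⟨a', ha', p', hp', rfl⟩
        exact ⟨a + a', A.add_mem ha ha', p + p', P.add_mem hp hp', by abel⟩)
    (by rintro x ⟨a, ha, p, hp, rfl⟩
        exact ⟨-a, A.neg_mem ha, -p, P.neg_mem hp, by abel⟩)
    (by rintro x y ⟨a, ha, p, hp, rfl⟩
        exact ⟨x * a, A.mul_mem_left _ _ ha, x * p, P.mul_mem_left _ _ hp, by noncomm_ring⟩)
    (by rintro x y ⟨a, ha, p, hp, rfl⟩
        exact ⟨a * y, A.mul_mem_right _ _ ha, p * y, P.mul_mem_right _ _ hp, by noncomm_ring⟩)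

lemma mem_idealSum {A P : TwoSidedIdeal R} {x : R} :
    x ∈ idealSum A P ↔ ∃ a ∈ A, ∃ p ∈ P, x = a + p :=
  TwoSidedIdeal.mem_mk' _ _ _ _ _ _ _

/-- Proposition 6.9: a proper graded ideal `P` is graded strongly weakly 2-absorbing if and
only if the defining condition holds for all graded ideals `A, B, C` with `P ⊆ A`. -/
theorem stmt18 (𝒜 : G → AddSubgroup R) [GradedRing 𝒜] (P : TwoSidedIdeal R)
    (hProper : P ≠ ⊤) (hGraded : IsGradedIdeal 𝒜 P) :
    IsGradedStronglyWeakly2Absorbing 𝒜 P ↔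
      ∀ A B C : TwoSidedIdeal R, IsGradedIdeal 𝒜 A → IsGradedIdeal 𝒜 B → IsGradedIdeal 𝒜 C →
        P ≤ A →
        (∃ a ∈ A, ∃ b ∈ B, ∃ c ∈ C, a * b * c ≠ 0) →
        (∀ a ∈ A, ∀ b ∈ B, ∀ c ∈ C, a * b * c ∈ P) →
        (∀ a ∈ A, ∀ b ∈ B, a * b ∈ P) ∨ (∀ a ∈ A, ∀ c ∈ C, a * c ∈ P) ∨
          (∀ b ∈ B, ∀ c ∈ C, b * c ∈ P) := by
  constructor
  · rintro ⟨-, -, h⟩ A B C hA hB hC _ hne hsub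
    exact h A B C hA hB hC hne hsub
  · intro h
    refine ⟨hProper, hGraded, fun A B C hA hB hC hne hsub => ?_⟩
    set A' := idealSum A P with hA'
    have hgr : IsGradedIdeal 𝒜 A' := by
      rintro x hx g
      rw [mem_idealSum] at hx ⊢
      obtain ⟨a, ha, p, hp, rfl⟩ := hx
      refine ⟨DirectSum.decompose 𝒜 a g, hA a ha g, DirectSum.decompose 𝒜 p g, hGraded p hp g, ?_⟩
      rw [DirectSum.decompose_add]
      simp
    have hPA' : P ≤ A' := fun x hx => mem_idealSum.mpr ⟨0, A.zero_mem, x, hx, (zero_add x).symm⟩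
    have hAA' : A ≤ A' := fun x hx => mem_idealSum.mpr ⟨x, hx, 0, P.zero_mem, (add_zero x).symm⟩
    have hne' : ∃ a ∈ A', ∃ b ∈ B, ∃ c ∈ C, a * b * c ≠ 0 := by
      obtain ⟨a, ha, b, hb, c, hc, h0⟩ := hne
      exact ⟨a, hAA' ha, b, hb, c, hc, h0⟩
    have hsub' : ∀ a ∈ A', ∀ b ∈ B, ∀ c ∈ C, a * b * c ∈ P := by
      intro x hx b hb c hc
      obtain ⟨a, ha, p, hp, rfl⟩ := mem_idealSum.mp hx
      have : (a + p) * b * c = a * b * c + p * (b * c) := by noncomm_ring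
      rw [this]
      exact P.add_mem (hsub a ha b hb c hc) (P.mul_mem_right _ _ hp)
    rcases h A' B C hgr hB hC hPA' hne' hsub' with h1 | h2 | h3
    · exact Or.inl fun a ha b hb => h1 a (hAA' ha) b hb
    · exact Or.inr (Or.inl fun a ha c hc => h2 a (hAA' ha) c hc)
    · exact Or.inr (Or.inr h3)
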